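/- arXiv:1708.02087 — 2 statements merged into one kernel-verified Lean document; each statement's English description precedes it below -/
import Mathlib

section
/- Let (𝒳,d) be a compact metric space with a finite subset A, let F be a nonempty finite set, ε > 0 and 0 < α ≤ 1/2. Suppose S ⊂ A^F is 2ε-separated with respect to the sup metric d_F((x_g),(y_g)) = max_{g∈F} d(x_g,y_g). Let X = (X_g)_{g∈F} and Y = (Y_g)_{g∈F} be 𝒳^F-valued random variables such that X is uniformly distributed over S and E(#{g ∈ F : d(X_g, Y_g) ≥ ε}) < α|F|. Then I(X;Y) ≥ log|S| − |F|·H(α) − α|F|·log|A|. -/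
open MeasureTheory Filter

noncomputable def miSum {Ω 𝒳 𝒴 : Type*} [MeasurableSpace Ω]
    (P : Measure Ω) (X : Ω → 𝒳) (Y : Ω → 𝒴) (Pp : Finset (Set 𝒳)) (Qq : Finset (Set 𝒴)) : ℝ :=
  ∑ A ∈ Pp, ∑ B ∈ Qq,
    (P {ω | X ω ∈ A ∧ Y ω ∈ B}).toReal *
      Real.log ((P {ω | X ω ∈ A ∧ Y ω ∈ B}).toReal /
        ((P {ω | X ω ∈ A}).toReal * (P {ω | Y ω ∈ B}).toReal))

/-- A finite measurable partition of a measurable space, given as a finite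
collection of measurable, pairwise disjoint sets covering the space. -/
def IsFinPartition {α : Type*} [MeasurableSpace α] (Pp : Finset (Set α)) : Prop :=
  (∀ A ∈ Pp, MeasurableSet A) ∧
  (∀ A ∈ Pp, ∀ B ∈ Pp, A ≠ B → Disjoint A B) ∧
  (⋃ A ∈ Pp, A) = Set.univ

/-- The mutual information `I(X;Y)`: the supremum over all finite measurable
partitions `Pp` of `𝒳` and `Qq` of `𝒴` of
`∑_{P∈Pp,Q∈Qq} ℙ((X,Y)∈P×Q) log (ℙ((X,Y)∈P×Q) / (ℙ(X∈P)ℙ(Y∈Q)))`. -/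
noncomputable def mutualInfo {Ω 𝒳 𝒴 : Type*} [MeasurableSpace Ω] [MeasurableSpace 𝒳]
    [MeasurableSpace 𝒴] (P : Measure Ω) (X : Ω → 𝒳) (Y : Ω → 𝒴) : ℝ :=
  ⨆ pq : {pq : Finset (Set 𝒳) × Finset (Set 𝒴) // IsFinPartition pq.1 ∧ IsFinPartition pq.2},
    miSum P X Y pq.1.1 pq.1.2

/-- The binary entropy function `H(p) = -p log p - (1-p) log (1-p)`. -/
noncomputable def binEnt (p : ℝ) : ℝ := -(p * Real.log p) - (1 - p) * Real.log (1 - p)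

/-!
Decode `Y` by its far-pattern: for every codeword `s ∈ S`, the set of coordinates where `Y` is
`ε`-far from `s`. Two codewords with the same far-set `B` that agree on `B` are `2ε`-close in every
coordinate, hence equal; so at most `|A| ^ |B|` codewords have far-set `B`, and the weights
`w = α ^ |B| (1 - α) ^ (n - |B|) / |A| ^ |B|` of the codewords sum to at most `1` by the binomial
theorem. Gibbs' inequality on each cell of the pattern partition then gives
`I(X;Y) ≥ log |S| + E[log w] = log |S| + n log (1 - α) - E[#far] log ((1 - α) |A| / α)`, and as
`α ≤ 1/2` the coefficient of `E[#far] < α n` is nonpositive. Because `X` is uniform on `S`, every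
partition sum is at most `log |S|`, so the supremum defining `I(X;Y)` dominates this one.
-/

open Real Finset

theorem sum_mul_log_le_sum_mul_log_div {β : Type*} {t : Finset β} {p r : β → ℝ}
    (hp : ∀ i ∈ t, 0 ≤ p i) (hr : ∀ i ∈ t, 0 < r i) (hr1 : ∑ i ∈ t, r i ≤ 1) :
    ∑ i ∈ t, p i * log (r i) ≤ ∑ i ∈ t, p i * log (p i / ∑ j ∈ t, p j) := by
  set Q := ∑ j ∈ t, p j
  have hQ : 0 ≤ Q := sum_nonneg hp
  have hterm : ∀ i ∈ t, p i - Q * r i ≤ p i * log (p i / Q) - p i * log (r i) := by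
    intro i hi
    rcases (hp i hi).eq_or_lt with h | h
    · rw [← h]
      simpa using mul_nonneg hQ (hr i hi).le
    have hQi : 0 < Q := h.trans_le (single_le_sum hp hi)
    have hri := hr i hi
    have hlog : log (Q * r i / p i) ≤ Q * r i / p i - 1 := log_le_sub_one_of_pos (by positivity)
    rw [log_div (by positivity) h.ne', log_mul hQi.ne' hri.ne'] at hlog
    have hcancel : p i * (Q * r i / p i - 1) = Q * r i - p i := by field_simp
    rw [log_div h.ne' hQi.ne']
    nlinarith [mul_le_mul_of_nonneg_left hlog h.le]
  have := sum_le_sum hterm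
  rw [sum_sub_distrib, sum_sub_distrib, ← mul_sum] at this
  nlinarith [mul_le_mul_of_nonneg_left hr1 hQ]

theorem log_card_add_sum_mul_log_le {σ γ : Type*} [Fintype σ] [Fintype γ] {p w : σ → γ → ℝ}
    (hp : ∀ s c, 0 ≤ p s c) (hsum : ∑ s, ∑ c, p s c = 1) (hw : ∀ s c, 0 < w s c)
    (hw1 : ∀ s c, p s c ≠ 0 → ∑ t, w t c ≤ 1) :
    log (Fintype.card σ) + ∑ s, ∑ c, p s c * log (w s c) ≤
      ∑ s, ∑ c, p s c * log (p s c / ((Fintype.card σ : ℝ)⁻¹ * ∑ t, p t c)) := by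
  have hsplit : ∀ s c, p s c * log (p s c / ((Fintype.card σ : ℝ)⁻¹ * ∑ t, p t c)) =
      p s c * log (Fintype.card σ) + p s c * log (p s c / ∑ t, p t c) := by
    intro s c
    rcases (hp s c).eq_or_lt with h | h
    · simp [← h]
    have hq : 0 < ∑ t, p t c := h.trans_le (single_le_sum (fun t _ => hp t c) (mem_univ s))
    have hK : (0 : ℝ) < Fintype.card σ := by exact_mod_cast Fintype.card_pos_iff.2 ⟨s⟩
    rw [← mul_add, ← log_mul hK.ne' (by positivity), div_mul_eq_div_div, div_inv_eq_mul,
      mul_div_right_comm, mul_comm (Fintype.card σ : ℝ)]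
  have hgibbs : ∀ c, ∑ s, p s c * log (w s c) ≤ ∑ s, p s c * log (p s c / ∑ t, p t c) := by
    intro c
    by_cases h : ∃ s, p s c ≠ 0
    · obtain ⟨s, hs⟩ := h
      exact sum_mul_log_le_sum_mul_log_div (fun s _ => hp s c) (fun s _ => hw s c) (hw1 s c hs)
    · simp only [not_exists, not_not] at h
      simp [h]
  simp_rw [hsplit, sum_add_distrib, ← sum_mul, hsum, one_mul]
  refine (add_le_add_iff_left _).2 ?_
  rw [sum_comm]
  exact (sum_le_sum fun c _ => hgibbs c).trans_eq sum_comm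

noncomputable def errorWeight (α : ℝ) (n a m : ℕ) : ℝ := α ^ m * (1 - α) ^ (n - m) / (a : ℝ) ^ m

theorem errorWeight_pos {α : ℝ} (hα0 : 0 < α) (hα1 : α < 1) {a : ℕ} (ha : 0 < a) (n m : ℕ) :
    0 < errorWeight α n a m := by
  unfold errorWeight
  have : (0 : ℝ) < 1 - α := by linarith
  positivity

theorem log_errorWeight {α : ℝ} (hα0 : 0 < α) (hα1 : α < 1) {n a m : ℕ} (ha : 0 < a)
    (hm : m ≤ n) :
    log (errorWeight α n a m) = n * log (1 - α) + m * (log α - log (1 - α) - log a) := by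
  have : (0 : ℝ) < 1 - α := by linarith
  unfold errorWeight
  rw [log_div (by positivity) (by positivity), log_mul (by positivity) (by positivity),
    log_pow, log_pow, log_pow, Nat.cast_sub hm]
  ring

theorem sum_powerset_mul_errorWeight_le_one {ι : Type*} [Fintype ι] {α : ℝ} (hα0 : 0 ≤ α)
    (hα1 : α ≤ 1) {a : ℕ} {N : Finset ι → ℕ} (hN : ∀ B, N B ≤ a ^ #B) :
    ∑ B ∈ univ.powerset, N B * errorWeight α (Fintype.card ι) a #B ≤ 1 := by
  calc ∑ B ∈ univ.powerset, N B * errorWeight α (Fintype.card ι) a #B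
      ≤ ∑ B ∈ univ.powerset, α ^ #B * (1 - α) ^ (#(univ : Finset ι) - #B) := by
        refine sum_le_sum fun B _ => ?_
        have h1α : 0 ≤ 1 - α := by linarith
        unfold errorWeight
        rcases eq_or_ne ((a : ℝ) ^ #B) 0 with h | h
        · simp [h]; positivity
        calc (N B : ℝ) * (α ^ #B * (1 - α) ^ (Fintype.card ι - #B) / a ^ #B)
            ≤ (a : ℝ) ^ #B * (α ^ #B * (1 - α) ^ (Fintype.card ι - #B) / a ^ #B) := by
              gcongr; exact_mod_cast hN B
          _ = _ := by rw [mul_div_cancel₀ _ h, card_univ]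
    _ = 1 := by rw [sum_pow_mul_eq_add_pow]; simp

section Decoding

variable {ι 𝒳 : Type*} [Fintype ι] [PseudoMetricSpace 𝒳]

noncomputable def farCoords (ε : ℝ) (s y : ι → 𝒳) : Finset ι := {g | ε ≤ dist (s g) (y g)}

theorem card_filter_farCoords_eq_le [DecidableEq ι] {ε : ℝ} (hε : 0 < ε) {A : Finset 𝒳}
    {S : Finset (ι → 𝒳)} (hSA : ∀ s ∈ S, ∀ g, s g ∈ A)
    (hsep : ∀ s ∈ S, ∀ t ∈ S, s ≠ t → ∃ g, 2 * ε ≤ dist (s g) (t g)) (y : ι → 𝒳)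
    (B : Finset ι) : #{s ∈ S | farCoords ε s y = B} ≤ #A ^ #B := by
  calc #{s ∈ S | farCoords ε s y = B}
      ≤ #(Fintype.piFinset fun _ : B => A) := by
        refine card_le_card_of_injOn (fun s g => s g) (fun s hs => ?_) fun s hs t ht hst => ?_
        · simp only [mem_coe, mem_filter] at hs
          simpa using fun g _ => hSA s hs.1 g
        simp only [mem_coe, mem_filter] at hs ht
        by_contra hne
        obtain ⟨g, hg⟩ := hsep s hs.1 t ht.1 hne
        by_cases hgB : g ∈ B
        · have := congrFun hst ⟨g, hgB⟩
          simp only at this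
          rw [this, dist_self] at hg
          linarith
        have hs' : dist (s g) (y g) < ε := by
          simpa [farCoords] using (hs.2 ▸ hgB : g ∉ farCoords ε s y)
        have ht' : dist (t g) (y g) < ε := by
          simpa [farCoords] using (ht.2 ▸ hgB : g ∉ farCoords ε t y)
        linarith [dist_triangle_right (s g) (t g) (y g)]
    _ = #A ^ #B := by simp

theorem sum_errorWeight_farCoords_le_one {α : ℝ} (hα0 : 0 ≤ α) (hα1 : α ≤ 1) {ε : ℝ}
    (hε : 0 < ε) {A : Finset 𝒳} {S : Finset (ι → 𝒳)} (hSA : ∀ s ∈ S, ∀ g, s g ∈ A)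
    (hsep : ∀ s ∈ S, ∀ t ∈ S, s ≠ t → ∃ g, 2 * ε ≤ dist (s g) (t g)) (y : ι → 𝒳) :
    ∑ s ∈ S, errorWeight α (Fintype.card ι) #A #(farCoords ε s y) ≤ 1 := by
  classical
  rw [← sum_fiberwise_of_maps_to (g := fun s => farCoords ε s y) (t := univ.powerset)
    (by simp)]
  refine Eq.trans_le ?_
    (sum_powerset_mul_errorWeight_le_one hα0 hα1 (card_filter_farCoords_eq_le hε hSA hsep y))
  refine sum_congr rfl fun B _ => ?_
  rw [sum_congr rfl fun s hs => by rw [(mem_filter.1 hs).2], sum_const, nsmul_eq_mul]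

theorem ncard_setOf_le_dist_eq_card_farCoords (ε : ℝ) (s y : ι → 𝒳) :
    ({g | ε ≤ dist (s g) (y g)} : Set ι).ncard = #(farCoords ε s y) := by
  rw [← Set.ncard_coe_finset]
  congr
  ext g
  simp [farCoords]

noncomputable def farPattern (ε : ℝ) (S : Finset (ι → 𝒳)) (y : ι → 𝒳) : S → Finset ι :=
  fun s => farCoords ε s y

theorem measurable_farPattern [MeasurableSpace 𝒳] [OpensMeasurableSpace 𝒳] (ε : ℝ)
    (S : Finset (ι → 𝒳)) : Measurable (farPattern ε S) := by
  refine measurable_pi_lambda _ fun s => measurable_finset_iff.2 fun g => ?_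
  simp only [farPattern, farCoords, mem_filter, mem_univ, true_and]
  exact measurableSet_setOfPred.1 (measurableSet_le measurable_const
    ((continuous_const.dist continuous_id).measurable.comp (measurable_pi_apply g)))

end Decoding

theorem log_card_sub_le_sum_mul_log_div {σ γ : Type*} [Fintype σ] [Fintype γ]
    {p : σ → γ → ℝ} {m : σ → γ → ℕ} {α : ℝ} {n a : ℕ} (hα0 : 0 < α) (hα : α ≤ 1 / 2)
    (ha : 1 ≤ a) (hm : ∀ s c, m s c ≤ n) (hp : ∀ s c, 0 ≤ p s c)
    (hsum : ∑ s, ∑ c, p s c = 1) (herr : ∑ s, ∑ c, p s c * m s c ≤ α * n)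
    (hdecode : ∀ s c, p s c ≠ 0 → ∑ t, errorWeight α n a (m t c) ≤ 1) :
    log (Fintype.card σ) - n * binEnt α - α * n * log a ≤
      ∑ s, ∑ c, p s c * log (p s c / ((Fintype.card σ : ℝ)⁻¹ * ∑ t, p t c)) := by
  have hα1 : α < 1 := by linarith
  have hL : log α - log (1 - α) - log a ≤ 0 := by
    have : log α ≤ log (1 - α) := log_le_log hα0 (by linarith)
    have : 0 ≤ log a := log_nonneg (by exact_mod_cast ha)
    linarith
  have hlog : ∀ s c, p s c * log (errorWeight α n a (m s c)) =
      n * log (1 - α) * p s c + (log α - log (1 - α) - log a) * (p s c * m s c) := by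
    intro s c
    rw [log_errorWeight hα0 hα1 ha (hm s c)]
    ring
  calc log (Fintype.card σ) - n * binEnt α - α * n * log a
      = log (Fintype.card σ) + n * log (1 - α) + (log α - log (1 - α) - log a) * (α * n) := by
        unfold binEnt; ring
    _ ≤ log (Fintype.card σ) + n * log (1 - α) +
          (log α - log (1 - α) - log a) * ∑ s, ∑ c, p s c * m s c := by
        have := mul_le_mul_of_nonpos_left herr hL
        linarith
    _ = log (Fintype.card σ) + ∑ s, ∑ c, p s c * log (errorWeight α n a (m s c)) := by
        simp_rw [hlog, sum_add_distrib, ← mul_sum, hsum, mul_one, add_assoc]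
    _ ≤ _ := log_card_add_sum_mul_log_le hp hsum (fun _ _ => errorWeight_pos hα0 hα1 ha _ _)
        hdecode

section Partitions

variable {Ω 𝒳 𝒴 : Type*} [MeasurableSpace Ω] {P : Measure Ω} {X : Ω → 𝒳} {Y : Ω → 𝒴}

theorem sum_measureReal_preimage_inter [IsFiniteMeasure P] {κ : Type*} {t : Finset κ}
    {U : κ → Set 𝒳} (hU : ∀ i ∈ t, MeasurableSet (X ⁻¹' U i))
    (hdisj : (t : Set κ).PairwiseDisjoint U) (hcover : ∀ ω, ∃ i ∈ t, X ω ∈ U i)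
    {E : Set Ω} (hE : MeasurableSet E) :
    ∑ i ∈ t, P.real (X ⁻¹' U i ∩ E) = P.real E := by
  rw [← measureReal_biUnion_finset (fun i hi j hj hij => ((hdisj hi hj hij).preimage X).mono
    Set.inter_subset_left Set.inter_subset_left) fun i hi => (hU i hi).inter hE]
  congr 1
  ext ω
  simp only [Set.mem_iUnion, Set.mem_inter_iff, Set.mem_preimage, exists_prop]
  exact ⟨fun ⟨_, _, _, h⟩ => h, fun h => let ⟨i, hi, hXi⟩ := hcover ω; ⟨i, hi, hXi, h⟩⟩

theorem integral_comp_eq_sum [IsFiniteMeasure P] {β : Type*} [Fintype β] {Z : Ω → β}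
    (hZ : ∀ b, MeasurableSet (Z ⁻¹' {b})) (F : β → ℝ) :
    ∫ ω, F (Z ω) ∂P = ∑ b, P.real (Z ⁻¹' {b}) * F b := by
  classical
  have hpoint : ∀ ω, F (Z ω) = ∑ b, (Z ⁻¹' {b}).indicator (fun _ => F b) ω := fun ω => by
    simp [Set.indicator]
  simp_rw [hpoint]
  rw [integral_finsetSum _ fun b _ => (integrable_const _).indicator (hZ b)]
  simp [integral_indicator_const _ (hZ _), mul_comm]

theorem miSum_eq_sum_measureReal (Pp : Finset (Set 𝒳)) (Qq : Finset (Set 𝒴)) :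
    miSum P X Y Pp Qq = ∑ A ∈ Pp, ∑ B ∈ Qq, P.real (X ⁻¹' A ∩ Y ⁻¹' B) *
      log (P.real (X ⁻¹' A ∩ Y ⁻¹' B) / (P.real (X ⁻¹' A) * P.real (Y ⁻¹' B))) :=
  rfl

theorem miSum_image_fiber {α β : Type*} [Fintype α] [Fintype β] [DecidableEq (Set 𝒳)]
    [DecidableEq (Set 𝒴)] (f : 𝒳 → α) (g : 𝒴 → β) :
    miSum P X Y (univ.image fun a => f ⁻¹' {a}) (univ.image fun b => g ⁻¹' {b}) =
      ∑ a, ∑ b, P.real (X ⁻¹' (f ⁻¹' {a}) ∩ Y ⁻¹' (g ⁻¹' {b})) *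
        log (P.real (X ⁻¹' (f ⁻¹' {a}) ∩ Y ⁻¹' (g ⁻¹' {b})) /
          (P.real (X ⁻¹' (f ⁻¹' {a})) * P.real (Y ⁻¹' (g ⁻¹' {b})))) := by
  rw [miSum_eq_sum_measureReal, sum_image_of_disjoint (by simp)
    (by simpa using Set.pairwiseDisjoint_fiber f Set.univ)]
  refine sum_congr rfl fun a _ => ?_
  rw [sum_image_of_disjoint (by simp) (by simpa using Set.pairwiseDisjoint_fiber g Set.univ)]

variable [MeasurableSpace 𝒳] [MeasurableSpace 𝒴]

theorem IsFinPartition.sum_measureReal_preimage_inter [IsFiniteMeasure P]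
    {Pp : Finset (Set 𝒳)} (hPp : IsFinPartition Pp) (hX : Measurable X) {E : Set Ω}
    (hE : MeasurableSet E) : ∑ A ∈ Pp, P.real (X ⁻¹' A ∩ E) = P.real E := by
  refine _root_.sum_measureReal_preimage_inter (fun A hA => hX (hPp.1 A hA))
    (fun A hA B hB => hPp.2.1 A hA B hB) (fun ω => ?_) hE
  have h := Set.mem_univ (X ω)
  rw [← hPp.2.2] at h
  simpa using h

theorem miSum_le_log_inv [IsProbabilityMeasure P] (hX : Measurable X) (hY : Measurable Y)
    {Pp : Finset (Set 𝒳)} {Qq : Finset (Set 𝒴)} (hPp : IsFinPartition Pp)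
    (hQq : IsFinPartition Qq) {δ : ℝ} (hδ : 0 < δ)
    (hXδ : ∀ A ∈ Pp, P.real (X ⁻¹' A) ≠ 0 → δ ≤ P.real (X ⁻¹' A)) :
    miSum P X Y Pp Qq ≤ log δ⁻¹ := by
  have htotal : ∑ A ∈ Pp, ∑ B ∈ Qq, P.real (X ⁻¹' A ∩ Y ⁻¹' B) = 1 := by
    calc ∑ A ∈ Pp, ∑ B ∈ Qq, P.real (X ⁻¹' A ∩ Y ⁻¹' B)
        = ∑ A ∈ Pp, P.real (X ⁻¹' A) := sum_congr rfl fun A hA => by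
          simp_rw [Set.inter_comm (X ⁻¹' A)]
          exact hQq.sum_measureReal_preimage_inter hY (hX (hPp.1 A hA))
      _ = 1 := by simpa using hPp.sum_measureReal_preimage_inter (P := P) hX .univ
  rw [miSum_eq_sum_measureReal, ← one_mul (log δ⁻¹), ← htotal, sum_mul]
  refine sum_le_sum fun A hAPp => ?_
  rw [sum_mul]
  refine sum_le_sum fun B _ => ?_
  rcases (measureReal_nonneg (μ := P) (s := X ⁻¹' A ∩ Y ⁻¹' B)).eq_or_lt with h | h
  · rw [← h]; simp
  have hA : P.real (X ⁻¹' A ∩ Y ⁻¹' B) ≤ P.real (X ⁻¹' A) :=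
    measureReal_mono Set.inter_subset_left
  have hB : P.real (X ⁻¹' A ∩ Y ⁻¹' B) ≤ P.real (Y ⁻¹' B) :=
    measureReal_mono Set.inter_subset_right
  have hδA : 1 ≤ δ⁻¹ * P.real (X ⁻¹' A) := by
    rw [inv_mul_eq_div, one_le_div hδ]
    exact hXδ A hAPp (h.trans_le hA).ne'
  refine mul_le_mul_of_nonneg_left (log_le_log (div_pos h (mul_pos (h.trans_le hA)
    (h.trans_le hB))) ?_) h.le
  rw [div_le_iff₀ (mul_pos (h.trans_le hA) (h.trans_le hB)), ← mul_assoc]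
  exact hB.trans (le_mul_of_one_le_left measureReal_nonneg hδA)

theorem miSum_le_mutualInfo {C : ℝ}
    (hC : ∀ Pp Qq, IsFinPartition Pp → IsFinPartition Qq → miSum P X Y Pp Qq ≤ C)
    {Pp : Finset (Set 𝒳)} {Qq : Finset (Set 𝒴)} (hPp : IsFinPartition Pp)
    (hQq : IsFinPartition Qq) : miSum P X Y Pp Qq ≤ mutualInfo P X Y :=
  le_ciSup (f := fun pq : {pq : Finset (Set 𝒳) × Finset (Set 𝒴) //
      IsFinPartition pq.1 ∧ IsFinPartition pq.2} => miSum P X Y pq.1.1 pq.1.2)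
    ⟨C, by rintro _ ⟨pq, rfl⟩; exact hC _ _ pq.2.1 pq.2.2⟩ ⟨(Pp, Qq), hPp, hQq⟩

theorem miSum_le_log_card [IsProbabilityMeasure P] (hX : Measurable X) (hY : Measurable Y)
    {S : Finset 𝒳} (hS : S.Nonempty) (hXS : ∀ ω, X ω ∈ S)
    (hunif : ∀ s ∈ S, P.real (X ⁻¹' {s}) = 1 / #S)
    {Pp : Finset (Set 𝒳)} {Qq : Finset (Set 𝒴)} (hPp : IsFinPartition Pp)
    (hQq : IsFinPartition Qq) : miSum P X Y Pp Qq ≤ log #S := by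
  have hK : (0 : ℝ) < #S := by exact_mod_cast hS.card_pos
  rw [← inv_inv (#S : ℝ)]
  refine miSum_le_log_inv hX hY hPp hQq (inv_pos.2 hK) fun A _ hA => ?_
  obtain ⟨ω, hω⟩ := nonempty_of_measureReal_ne_zero hA
  calc (#S : ℝ)⁻¹ = P.real (X ⁻¹' {X ω}) := by rw [hunif _ (hXS ω), one_div]
    _ ≤ P.real (X ⁻¹' A) := measureReal_mono fun ω' (h : X ω' = X ω) => by
      simpa [Set.mem_preimage, h] using hω

theorem isFinPartition_image_fiber {α : Type*} [Fintype α] [DecidableEq (Set 𝒳)]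
    {f : 𝒳 → α} (hf : ∀ a, MeasurableSet (f ⁻¹' {a})) :
    IsFinPartition (univ.image fun a => f ⁻¹' {a}) := by
  refine ⟨by simpa using hf, ?_, by ext x; simp⟩
  simp only [mem_image, mem_univ, true_and]
  rintro _ ⟨a, rfl⟩ _ ⟨b, rfl⟩ hab
  exact Set.disjoint_singleton.2 (fun h => hab (by rw [h])) |>.preimage f

end Partitions

section Uniform

variable {Ω 𝒳 𝒴 γ : Type*} [MeasurableSpace Ω] [MeasurableSpace 𝒳] [MeasurableSpace 𝒴]
  [Fintype γ] {P : Measure Ω} {X : Ω → 𝒳} {Y : Ω → 𝒴}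
  [MeasurableSingletonClass 𝒳] {S : Finset 𝒳} {φ : 𝒴 → γ}

theorem sum_measureReal_preimage_singleton_inter [IsFiniteMeasure P] (hX : Measurable X)
    (hXS : ∀ ω, X ω ∈ S) {E : Set Ω} (hE : MeasurableSet E) :
    ∑ s : S, P.real (X ⁻¹' {↑s} ∩ E) = P.real E :=
  sum_measureReal_preimage_inter (fun _ _ => hX (measurableSet_singleton _))
    (fun _ _ _ _ hst => Set.disjoint_singleton.2 (Subtype.coe_injective.ne hst))
    (fun ω => ⟨⟨X ω, hXS ω⟩, mem_univ _, rfl⟩) hE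

theorem sum_sum_measureReal_preimage_inter_eq_one [IsProbabilityMeasure P] (hX : Measurable X)
    (hY : Measurable Y) (hXS : ∀ ω, X ω ∈ S) (hφ : ∀ c, MeasurableSet (φ ⁻¹' {c})) :
    ∑ s : S, ∑ c, P.real (X ⁻¹' {↑s} ∩ Y ⁻¹' (φ ⁻¹' {c})) = 1 := by
  rw [sum_comm]
  simp_rw [sum_measureReal_preimage_singleton_inter hX hXS (hY (hφ _))]
  simpa using sum_measureReal_preimage_inter (P := P) (t := univ) (fun c _ => hY (hφ c))
    (by simpa using Set.pairwiseDisjoint_fiber φ Set.univ)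
    (fun ω => ⟨φ (Y ω), mem_univ _, rfl⟩) MeasurableSet.univ

theorem integral_comp_eq_sum_sum [IsFiniteMeasure P] (hX : Measurable X) (hY : Measurable Y)
    (hXS : ∀ ω, X ω ∈ S) (hφ : ∀ c, MeasurableSet (φ ⁻¹' {c})) (F : S → γ → ℝ) :
    ∫ ω, F ⟨X ω, hXS ω⟩ (φ (Y ω)) ∂P =
      ∑ s : S, ∑ c, P.real (X ⁻¹' {↑s} ∩ Y ⁻¹' (φ ⁻¹' {c})) * F s c := by
  classical
  let Z : Ω → S × γ := fun ω => (⟨X ω, hXS ω⟩, φ (Y ω))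
  have hZ : ∀ z : S × γ, Z ⁻¹' {z} = X ⁻¹' {↑z.1} ∩ Y ⁻¹' (φ ⁻¹' {z.2}) := by
    intro z
    ext ω
    simp [Z, Prod.ext_iff, Subtype.ext_iff]
  rw [integral_comp_eq_sum (Z := Z) (fun z => hZ z ▸
    (hX (measurableSet_singleton _)).inter (hY (hφ z.2))) fun z => F z.1 z.2,
    Fintype.sum_prod_type]
  simp only [hZ]

theorem sum_mul_log_le_mutualInfo_of_uniform [IsProbabilityMeasure P] (hX : Measurable X)
    (hY : Measurable Y) (hS : S.Nonempty) (hXS : ∀ ω, X ω ∈ S)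
    (hunif : ∀ s ∈ S, P.real (X ⁻¹' {s}) = 1 / #S) (hφ : ∀ c, MeasurableSet (φ ⁻¹' {c})) :
    ∑ s : S, ∑ c, P.real (X ⁻¹' {↑s} ∩ Y ⁻¹' (φ ⁻¹' {c})) *
        log (P.real (X ⁻¹' {↑s} ∩ Y ⁻¹' (φ ⁻¹' {c})) /
          ((Fintype.card S : ℝ)⁻¹ * ∑ t : S, P.real (X ⁻¹' {↑t} ∩ Y ⁻¹' (φ ⁻¹' {c})))) ≤
      mutualInfo P X Y := by
  classical
  let f : 𝒳 → Option S := fun x => if h : x ∈ S then some ⟨x, h⟩ else none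
  have hf_some : ∀ s : S, f ⁻¹' {some s} = {↑s} := by
    intro s
    ext x
    by_cases hx : x ∈ S
    · simp [f, hx, Subtype.ext_iff, eq_comm]
    · simpa [f, hx] using fun h : x = s => hx (h ▸ s.2)
  have hf_none : f ⁻¹' {none} = (↑S)ᶜ := by
    ext x
    by_cases hx : x ∈ S <;> simp [f, hx]
  have hf : ∀ o, MeasurableSet (f ⁻¹' {o}) := by
    rintro (_ | s)
    · rw [hf_none]; exact S.measurableSet.compl
    · rw [hf_some]; exact measurableSet_singleton _
  have hXf : X ⁻¹' (f ⁻¹' {none}) = ∅ := by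
    rw [hf_none]; ext ω; simpa using hXS ω
  refine Eq.trans_le ?_ (miSum_le_mutualInfo (fun _ _ => miSum_le_log_card hX hY hS hXS hunif)
    (isFinPartition_image_fiber hf) (isFinPartition_image_fiber hφ))
  rw [miSum_image_fiber, Fintype.sum_option, hXf]
  simp only [Set.empty_inter, measureReal_empty, zero_mul, sum_const_zero, zero_add, hf_some]
  refine sum_congr rfl fun s _ => sum_congr rfl fun c _ => ?_
  rw [hunif s s.2, one_div, Fintype.card_coe,
    sum_measureReal_preimage_singleton_inter hX hXS (hY (hφ c))]

end Uniform

theorem mutualInfo_ge_of_separated_sup_general {Ω 𝒳 ι : Type*} [MeasurableSpace Ω]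
    [MetricSpace 𝒳] [MeasurableSpace 𝒳] [BorelSpace 𝒳]
    [Fintype ι] [Nonempty ι]
    (P : Measure Ω) [IsProbabilityMeasure P] (A : Finset 𝒳) (ε α : ℝ)
    (hε : 0 < ε) (hα0 : 0 < α) (hα : α ≤ 1 / 2)
    (S : Finset (ι → 𝒳)) (hS : S.Nonempty) (hSA : ∀ s ∈ S, ∀ g : ι, s g ∈ A)
    (hsep : ∀ s ∈ S, ∀ t ∈ S, s ≠ t → ∃ g : ι, 2 * ε ≤ dist (s g) (t g))
    (X Y : Ω → ι → 𝒳) (hX : Measurable X) (hY : Measurable Y)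
    (hXS : ∀ ω, X ω ∈ S)
    (hunif : ∀ s ∈ S, (P {ω | X ω = s}).toReal = 1 / S.card)
    (hdist : ∫ ω, (({g : ι | ε ≤ dist (X ω g) (Y ω g)} : Set ι).ncard : ℝ) ∂P <
      α * Fintype.card ι) :
    Real.log S.card - (Fintype.card ι : ℝ) * binEnt α -
      α * (Fintype.card ι : ℝ) * Real.log A.card ≤ mutualInfo P X Y := by
  classical
  obtain ⟨s₀, hs₀⟩ := hS
  have hA : 1 ≤ #A := card_pos.2 ⟨_, hSA s₀ hs₀ (Classical.arbitrary ι)⟩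
  have hφ : ∀ c, MeasurableSet (farPattern ε S ⁻¹' {c}) := fun c =>
    measurable_farPattern ε S (measurableSet_singleton c)
  have herr : ∑ s : S, ∑ c, P.real (X ⁻¹' {↑s} ∩ Y ⁻¹' (farPattern ε S ⁻¹' {c})) * #(c s) ≤
      α * Fintype.card ι := by
    rw [← integral_comp_eq_sum_sum hX hY hXS hφ fun s c => (#(c s) : ℝ)]
    simp_rw [ncard_setOf_le_dist_eq_card_farCoords] at hdist
    exact hdist.le
  have hdecode : ∀ (s : S) c, P.real (X ⁻¹' {↑s} ∩ Y ⁻¹' (farPattern ε S ⁻¹' {c})) ≠ 0 →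
      ∑ t : S, errorWeight α (Fintype.card ι) #A #(c t) ≤ 1 := by
    intro s c h
    obtain ⟨ω, -, rfl : farPattern ε S (Y ω) = c⟩ := nonempty_of_measureReal_ne_zero h
    have := sum_errorWeight_farCoords_le_one hα0.le (by linarith) hε hSA hsep (Y ω)
    rwa [← sum_coe_sort S] at this
  calc Real.log #S - (Fintype.card ι : ℝ) * binEnt α - α * (Fintype.card ι : ℝ) * Real.log #A
      = log (Fintype.card S) - (Fintype.card ι : ℝ) * binEnt α -
          α * (Fintype.card ι : ℝ) * log #A := by rw [Fintype.card_coe]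
    _ ≤ _ := log_card_sub_le_sum_mul_log_div hα0 hα hA (fun s c => card_le_univ _)
        (fun _ _ => measureReal_nonneg)
        (sum_sum_measureReal_preimage_inter_eq_one hX hY hXS hφ) herr hdecode
    _ ≤ mutualInfo P X Y := sum_mul_log_le_mutualInfo_of_uniform hX hY ⟨s₀, hs₀⟩ hXS hunif hφ

/-- Let `A` be a finite subset of a compact metric space `𝒳`, `F` a nonempty finite
index set, and `S ⊆ A^F` a `2ε`-separated set for the sup metric
`d_F((x_g),(y_g)) = max_g d(x_g,y_g)`.  If `X` is uniformly distributed over `S` and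
`E(#{g : d(X_g,Y_g) ≥ ε}) < α|F|` with `0 < α ≤ 1/2`, then
`I(X;Y) ≥ log |S| - |F| H(α) - α |F| log |A|`. -/
theorem mutualInfo_ge_of_separated_sup {Ω 𝒳 ι : Type*} [MeasurableSpace Ω]
    [MetricSpace 𝒳] [CompactSpace 𝒳] [MeasurableSpace 𝒳] [BorelSpace 𝒳]
    [Fintype ι] [Nonempty ι]
    (P : Measure Ω) [IsProbabilityMeasure P] (A : Finset 𝒳) (ε α : ℝ)
    (hε : 0 < ε) (hα0 : 0 < α) (hα : α ≤ 1 / 2)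
    (S : Finset (ι → 𝒳)) (hS : S.Nonempty) (hSA : ∀ s ∈ S, ∀ g : ι, s g ∈ A)
    (hsep : ∀ s ∈ S, ∀ t ∈ S, s ≠ t → ∃ g : ι, 2 * ε ≤ dist (s g) (t g))
    (X Y : Ω → ι → 𝒳) (hX : Measurable X) (hY : Measurable Y)
    (hXS : ∀ ω, X ω ∈ S)
    (hunif : ∀ s ∈ S, (P {ω | X ω = s}).toReal = 1 / S.card)
    (hdist : ∫ ω, (({g : ι | ε ≤ dist (X ω g) (Y ω g)} : Set ι).ncard : ℝ) ∂P <
      α * Fintype.card ι) :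
    Real.log S.card - (Fintype.card ι : ℝ) * binEnt α -
      α * (Fintype.card ι : ℝ) * Real.log A.card ≤ mutualInfo P X Y :=
  mutualInfo_ge_of_separated_sup_general P A ε α hε hα0 hα S hS hSA hsep X Y hX hY hXS hunif hdist
end

section
/- Let G be a countable discrete amenable group acting continuously on a compact metric space (𝒳,d). If (𝒳,d) has tame growth of covering numbers, then the upper metric mean dimension satisfies: limsup_{ε→0} S(𝒳,G,d,ε)/|log ε| = limsup_{ε→0} S̃(𝒳,G,d,ε)/|log ε|, and the same holds with liminf. -/
open MeasureTheory Filter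

/-- The minimal cardinality `#(𝒳,ρ,ε)` of an open cover of `𝒳` all of whose members
have `ρ`-diameter `< ε`. -/
noncomputable def covNum (𝒳 : Type*) [TopologicalSpace 𝒳] (ρ : 𝒳 → 𝒳 → ℝ) (ε : ℝ) : ℕ :=
  sInf {n : ℕ | ∃ U : Finset (Set 𝒳), U.card = n ∧ (∀ V ∈ U, IsOpen V) ∧
    (⋃ V ∈ U, V) = Set.univ ∧ ∀ V ∈ U, ∀ x ∈ V, ∀ y ∈ V, ρ x y < ε}

/-- The max (sup) metric `d_F(x,y) = max_{g∈F} d(gx,gy)`. -/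
noncomputable def dMax {G 𝒳 : Type*} [SMul G 𝒳] [MetricSpace 𝒳] (F : Finset G)
    (x y : 𝒳) : ℝ :=
  ⨆ g ∈ F, dist (g • x) (g • y)

/-- The averaged metric `d̄_F(x,y) = (1/|F|) ∑_{g∈F} d(gx,gy)`. -/
noncomputable def dBar {G 𝒳 : Type*} [SMul G 𝒳] [MetricSpace 𝒳] (F : Finset G)
    (x y : 𝒳) : ℝ :=
  ((F.card : ℝ))⁻¹ * ∑ g ∈ F, dist (g • x) (g • y)

/-- `F` is a (left) Følner sequence of nonempty finite subsets of `G`. -/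
def IsFolner {G : Type*} [Group G] [DecidableEq G] (F : ℕ → Finset G) : Prop :=
  (∀ n, (F n).Nonempty) ∧
  ∀ g : G, Filter.Tendsto
    (fun n => ((symmDiff ((F n).image (fun h => g * h)) (F n)).card : ℝ) / ((F n).card : ℝ))
    Filter.atTop (nhds 0)

/-- `(𝒳,d)` has tame growth of covering numbers:
`ε^δ log #(𝒳,d,ε) → 0` as `ε → 0⁺`, for every `δ > 0`. -/
def TameGrowth (𝒳 : Type*) [MetricSpace 𝒳] : Prop :=
  ∀ δ > (0 : ℝ), Filter.Tendsto (fun ε : ℝ => ε ^ δ * Real.log (covNum 𝒳 dist ε))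
    (nhdsWithin 0 (Set.Ioi 0)) (nhds 0)

/-!
Since `d̄_F ≤ d_F` gives `S̃ ≤ S`, the content is a reverse inequality up to small errors.
Take a `d̄_F`-cover at scale `tε` and pick a point `p` in each member. If `d̄_F(p, y) < tε`,
Markov's inequality says that `d(gp, gy) ≥ ε` for at most `t|F|` elements `g ∈ F`; recording this
exceptional set `B` and, for `g ∈ B`, a point of a fixed `ε`-spanning set of `(𝒳, d)` close to `gy`,
determines `y` up to `d_F`-distance `2ε`. Comparing with the binomial distribution of parameter `t`
bounds the number of sets `B` by `t^{-t|F|} (1-t)^{-|F|}`, whence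
  `log #(𝒳, d_F, 2ε) ≤ log #(𝒳, d̄_F, tε) + |F| (t log t⁻¹ + log (1-t)⁻¹ + t log #(𝒳, d, ε))`.
For `t = ε^δ` tame growth makes the error term tend to `0`, and `|log ε^{1+δ}| = (1+δ) |log ε|`,
so for small `ε`
  `S(2ε)/|log 2ε| ≤ (1+δ)² S̃(ε^{1+δ})/|log ε^{1+δ}| + δ`.
Letting `δ → 0` gives both equalities.
-/

open Finset Filter Topology

section Metrics

variable {G 𝒳 : Type*} [SMul G 𝒳] [MetricSpace 𝒳]

theorem dMax_eq_sup' {F : Finset G} (hF : F.Nonempty) (x y : 𝒳) :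
    dMax F x y = F.sup' hF fun g => dist (g • x) (g • y) := by
  let f : G → ℝ := fun g => dist (g • x) (g • y)
  have hsup : 0 ≤ F.sup' hF f := dist_nonneg.trans (le_sup' f hF.choose_spec)
  have hle : ∀ g, ⨆ _ : g ∈ F, f g ≤ F.sup' hF f := fun g => Real.iSup_le (le_sup' f) hsup
  refine le_antisymm (Real.iSup_le hle hsup) (sup'_le _ _ fun g hg => ?_)
  exact (le_ciSup (Set.finite_range _).bddAbove hg).trans
    (le_ciSup ⟨_, Set.forall_mem_range.2 hle⟩ g)

theorem dMax_self {F : Finset G} (hF : F.Nonempty) (x : 𝒳) : dMax F x x = 0 := by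
  simp [dMax_eq_sup' hF]

theorem dMax_triangle_left {F : Finset G} (hF : F.Nonempty) (x y z : 𝒳) :
    dMax F y z ≤ dMax F x y + dMax F x z := by
  simp only [dMax_eq_sup' hF]
  exact sup'_le _ _ fun g hg => (dist_triangle_left _ _ (g • x)).trans
    (add_le_add (le_sup' (fun g => dist (g • x) (g • y)) hg)
      (le_sup' (fun g => dist (g • x) (g • z)) hg))

theorem continuous_dMax (hcont : ∀ g : G, Continuous fun x : 𝒳 => g • x)
    {F : Finset G} (hF : F.Nonempty) (x : 𝒳) : Continuous (dMax F x) := by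
  simp only [funext (dMax_eq_sup' hF x)]
  exact Continuous.finset_sup'_apply hF fun g _ => continuous_const.dist (hcont g)

theorem dBar_self (F : Finset G) (x : 𝒳) : dBar F x x = 0 := by
  simp [dBar]

theorem dBar_triangle_left (F : Finset G) (x y z : 𝒳) :
    dBar F y z ≤ dBar F x y + dBar F x z := by
  simp only [dBar, ← mul_add, ← sum_add_distrib]
  gcongr with g
  exact dist_triangle_left _ _ (g • x)

theorem continuous_dBar (hcont : ∀ g : G, Continuous fun x : 𝒳 => g • x) (F : Finset G) (x : 𝒳) :
    Continuous (dBar F x) :=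
  continuous_const.mul (continuous_finsetSum _ fun g _ => continuous_const.dist (hcont g))

theorem dBar_le_dMax {F : Finset G} (hF : F.Nonempty) (x y : 𝒳) : dBar F x y ≤ dMax F x y := by
  rw [dBar, inv_mul_le_iff₀ (by exact_mod_cast hF.card_pos), dMax_eq_sup' hF, ← nsmul_eq_mul]
  exact sum_le_card_nsmul _ _ _ fun g hg => le_sup' (fun g => dist (g • x) (g • y)) hg

end Metrics

section CoveringNumbers

variable {𝒳 : Type*} [TopologicalSpace 𝒳]

theorem covNum_le_card {ρ : 𝒳 → 𝒳 → ℝ} {ε : ℝ} (U : Finset (Set 𝒳))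
    (hopen : ∀ V ∈ U, IsOpen V) (hcover : (⋃ V ∈ U, V) = Set.univ)
    (hdiam : ∀ V ∈ U, ∀ x ∈ V, ∀ y ∈ V, ρ x y < ε) :
    covNum 𝒳 ρ ε ≤ U.card :=
  Nat.sInf_le ⟨U, rfl, hopen, hcover, hdiam⟩

theorem covNum_of_isEmpty [IsEmpty 𝒳] (ρ : 𝒳 → 𝒳 → ℝ) (ε : ℝ) : covNum 𝒳 ρ ε = 0 :=
  Nat.eq_zero_of_le_zero <| covNum_le_card ∅ (by simp) (by simp [Set.eq_empty_of_isEmpty])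
    (by simp)

variable [CompactSpace 𝒳] {ρ : 𝒳 → 𝒳 → ℝ}

theorem exists_cover_card_eq_covNum (hcont : ∀ x, Continuous (ρ x)) (hself : ∀ x, ρ x x = 0)
    (htri : ∀ x y z, ρ y z ≤ ρ x y + ρ x z) {ε : ℝ} (hε : 0 < ε) :
    ∃ U : Finset (Set 𝒳), U.card = covNum 𝒳 ρ ε ∧ (∀ V ∈ U, IsOpen V) ∧
      (⋃ V ∈ U, V) = Set.univ ∧ ∀ V ∈ U, ∀ x ∈ V, ∀ y ∈ V, ρ x y < ε := by
  classical
  let ball : 𝒳 → Set 𝒳 := fun x => ρ x ⁻¹' Set.Iio (ε / 2)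
  have hball : ∀ x, IsOpen (ball x) := fun x => isOpen_Iio.preimage (hcont x)
  obtain ⟨t, ht⟩ := isCompact_univ.elim_finite_subcover ball hball
    fun x _ => Set.mem_iUnion.2 ⟨x, show ρ x x < ε / 2 by rw [hself]; positivity⟩
  refine Nat.sInf_mem (s := {n | ∃ U : Finset (Set 𝒳), U.card = n ∧ (∀ V ∈ U, IsOpen V) ∧
    (⋃ V ∈ U, V) = Set.univ ∧ ∀ V ∈ U, ∀ x ∈ V, ∀ y ∈ V, ρ x y < ε})
    ⟨_, t.image ball, rfl, by simpa using fun x _ => hball x, ?_, ?_⟩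
  · simpa [Set.eq_univ_iff_forall] using ht
  · simp only [mem_image, forall_exists_index, and_imp, forall_apply_eq_imp_iff₂]
    intro x _ y hy z hz
    linarith [htri x y z, show ρ x y < ε / 2 from hy, show ρ x z < ε / 2 from hz]

theorem covNum_mono {ρ' : 𝒳 → 𝒳 → ℝ} (hle : ∀ x y, ρ x y ≤ ρ' x y)
    (hcont : ∀ x, Continuous (ρ' x)) (hself : ∀ x, ρ' x x = 0)
    (htri : ∀ x y z, ρ' y z ≤ ρ' x y + ρ' x z) {ε : ℝ} (hε : 0 < ε) :
    covNum 𝒳 ρ ε ≤ covNum 𝒳 ρ' ε := by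
  obtain ⟨U, hcard, hopen, hcover, hdiam⟩ := exists_cover_card_eq_covNum hcont hself htri hε
  exact hcard ▸ covNum_le_card U hopen hcover fun V hV x hx y hy =>
    (hle x y).trans_lt (hdiam V hV x hx y hy)

theorem exists_finset_card_le_covNum (hcont : ∀ x, Continuous (ρ x)) (hself : ∀ x, ρ x x = 0)
    (htri : ∀ x y z, ρ y z ≤ ρ x y + ρ x z) {ε : ℝ} (hε : 0 < ε) :
    ∃ P : Finset 𝒳, P.card ≤ covNum 𝒳 ρ ε ∧ ∀ y, ∃ p ∈ P, ρ p y < ε := by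
  classical
  rcases isEmpty_or_nonempty 𝒳 with h𝒳 | h𝒳
  · exact ⟨∅, by simp, isEmptyElim⟩
  obtain ⟨U, hcard, -, hcover, hdiam⟩ := exists_cover_card_eq_covNum hcont hself htri hε
  choose! p hp using fun (V : Set 𝒳) (hV : V.Nonempty) => hV
  refine ⟨U.image p, hcard ▸ card_image_le, fun y => ?_⟩
  obtain ⟨V, hV, hyV⟩ : ∃ V ∈ U, y ∈ V := by
    simpa using (hcover.symm ▸ Set.mem_univ y : y ∈ ⋃ V ∈ U, V)
  exact ⟨p V, mem_image_of_mem _ hV, hdiam V hV _ (hp V ⟨y, hyV⟩) y hyV⟩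

theorem one_le_covNum [Nonempty 𝒳] (hcont : ∀ x, Continuous (ρ x)) (hself : ∀ x, ρ x x = 0)
    (htri : ∀ x y z, ρ y z ≤ ρ x y + ρ x z) {ε : ℝ} (hε : 0 < ε) : 1 ≤ covNum 𝒳 ρ ε := by
  obtain ⟨P, hP, hspan⟩ := exists_finset_card_le_covNum hcont hself htri hε
  obtain ⟨p, hp, -⟩ := hspan (Classical.arbitrary 𝒳)
  exact (card_pos.2 ⟨p, hp⟩).trans_le hP

end CoveringNumbers

theorem card_filter_card_le_inv_pow_mul_inv_pow {ι : Type*} (F : Finset ι) (m : ℕ) {t : ℝ}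
    (ht₀ : 0 < t) (ht₁ : t < 1) :
    (#{B ∈ F.powerset | #B ≤ m} : ℝ) ≤ t⁻¹ ^ m * (1 - t)⁻¹ ^ #F := by
  have hs₀ : 0 < 1 - t := by linarith
  rw [inv_pow, inv_pow, ← mul_inv, ← one_div, le_div_iff₀ (by positivity)]
  calc (#{B ∈ F.powerset | #B ≤ m} : ℝ) * (t ^ m * (1 - t) ^ #F)
      = ∑ B ∈ F.powerset with #B ≤ m, t ^ m * (1 - t) ^ #F := by
        rw [sum_const, nsmul_eq_mul]
    _ ≤ ∑ B ∈ F.powerset with #B ≤ m, t ^ #B * (1 - t) ^ (#F - #B) :=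
        sum_le_sum fun B hB => mul_le_mul (pow_le_pow_of_le_one ht₀.le ht₁.le (mem_filter.1 hB).2)
          (pow_le_pow_of_le_one hs₀.le (by linarith) (Nat.sub_le _ _)) (by positivity)
          (by positivity)
    _ ≤ ∑ B ∈ F.powerset, t ^ #B * (1 - t) ^ (#F - #B) :=
        sum_le_sum_of_subset_of_nonneg (filter_subset _ _) fun B _ _ => by positivity
    _ = 1 := by rw [sum_pow_mul_eq_add_pow]; simp

theorem card_filter_le_of_sum_lt {ι : Type*} (F : Finset ι) (f : ι → ℝ) {ε t : ℝ} (hε : 0 < ε)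
    (hf : ∑ i ∈ F, f i < t * #F * ε) (hf₀ : ∀ i ∈ F, 0 ≤ f i) :
    #{i ∈ F | ε ≤ f i} ≤ ⌊t * #F⌋₊ := by
  refine Nat.le_floor (le_of_mul_le_mul_right ?_ hε)
  calc (#{i ∈ F | ε ≤ f i} : ℝ) * ε ≤ ∑ i ∈ F with ε ≤ f i, f i := by
        rw [← nsmul_eq_mul]; exact card_nsmul_le_sum _ _ _ fun i hi => (mem_filter.1 hi).2
    _ ≤ ∑ i ∈ F, f i := sum_le_sum_of_subset_of_nonneg (filter_subset _ _) fun i hi _ => hf₀ i hi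
    _ ≤ t * #F * ε := hf.le

section Counting

variable {G 𝒳 : Type*} [SMul G 𝒳] [MetricSpace 𝒳]

theorem covNum_dMax_le_card_of_forall_exists (hcont : ∀ g : G, Continuous fun x : 𝒳 => g • x)
    {F : Finset G} (hF : F.Nonempty) {ε : ℝ} (Z : Finset (G → 𝒳))
    (hZ : ∀ y : 𝒳, ∃ z ∈ Z, ∀ g ∈ F, dist (g • y) (z g) < ε) :
    covNum 𝒳 (dMax F) (2 * ε) ≤ #Z := by
  classical
  let W : (G → 𝒳) → Set 𝒳 := fun z => ⋂ g ∈ F, (g • ·) ⁻¹' Metric.ball (z g) ε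
  refine (covNum_le_card (Z.image W) ?_ ?_ ?_).trans card_image_le
  · simp only [mem_image, forall_exists_index, and_imp, forall_apply_eq_imp_iff₂]
    exact fun z _ => isOpen_biInter_finset fun g _ => Metric.isOpen_ball.preimage (hcont g)
  · refine Set.eq_univ_of_forall fun y => ?_
    obtain ⟨z, hz, hzy⟩ := hZ y
    exact Set.mem_biUnion (mem_image_of_mem W hz) (Set.mem_iInter₂.2 hzy)
  · simp only [mem_image, forall_exists_index, and_imp, forall_apply_eq_imp_iff₂]
    intro z _ a ha b hb
    rw [dMax_eq_sup' hF, sup'_lt_iff]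
    intro g hg
    have ha' : dist (g • a) (z g) < ε := Set.mem_iInter₂.1 ha g hg
    have hb' : dist (g • b) (z g) < ε := Set.mem_iInter₂.1 hb g hg
    linarith [dist_triangle_right (g • a) (g • b) (z g)]

theorem covNum_dMax_two_mul_le [CompactSpace 𝒳] [Nonempty 𝒳]
    (hcont : ∀ g : G, Continuous fun x : 𝒳 => g • x) {F : Finset G} (hF : F.Nonempty)
    {ε t : ℝ} (hε : 0 < ε) (ht : 0 < t) :
    covNum 𝒳 (dMax F) (2 * ε) ≤ covNum 𝒳 (dBar F) (t * ε) *
      (#{B ∈ F.powerset | #B ≤ ⌊t * #F⌋₊} * covNum 𝒳 dist ε ^ ⌊t * #F⌋₊) := by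
  classical
  set m := ⌊t * #F⌋₊
  set T := {B ∈ F.powerset | #B ≤ m}
  obtain ⟨P, hP, hPspan⟩ := exists_finset_card_le_covNum (continuous_dBar hcont F) (dBar_self F)
    (dBar_triangle_left F) (mul_pos ht hε)
  obtain ⟨Q, hQ, hQspan⟩ := exists_finset_card_le_covNum
    (fun x : 𝒳 => continuous_const.dist continuous_id') dist_self
    (fun x y z => dist_triangle_left y z x) hε
  have hQ₁ : 1 ≤ #Q := card_pos.2 <| let ⟨q, hq, _⟩ := hQspan (Classical.arbitrary 𝒳); ⟨q, hq⟩
  -- `z (p, B, c)` follows the orbit of `p` outside `B` and the points `c g ∈ Q` on `B`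
  let z : 𝒳 × (Σ B : Finset G, ∀ g ∈ B, 𝒳) → G → 𝒳 := fun q g =>
    if h : g ∈ q.2.1 then q.2.2 g h else g • q.1
  let I := P ×ˢ T.sigma fun B => B.pi fun _ => Q
  have hcover : ∀ y : 𝒳, ∃ w ∈ I.image z, ∀ g ∈ F, dist (g • y) (w g) < ε := by
    intro y
    obtain ⟨p, hp, hpy⟩ := hPspan y
    choose c hcQ hcy using fun g : G => hQspan (g • y)
    let B := {g ∈ F | ε ≤ dist (g • p) (g • y)}
    have hB : B ∈ T := by
      refine mem_filter.2 ⟨mem_powerset.2 (filter_subset _ _),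
        card_filter_le_of_sum_lt F _ hε ?_ fun _ _ => dist_nonneg⟩
      rw [dBar, inv_mul_lt_iff₀ (by exact_mod_cast hF.card_pos)] at hpy
      linarith
    refine ⟨z (p, ⟨B, fun g _ => c g⟩), mem_image_of_mem _ (mem_product.2 ⟨hp,
      mem_sigma.2 ⟨hB, mem_pi.2 fun g _ => hcQ g⟩⟩), fun g hg => ?_⟩
    by_cases hgB : g ∈ B
    · simpa [z, hgB, dist_comm] using hcy g
    · simp only [z, hgB, dite_false, dist_comm (g • y)]
      exact not_le.1 fun h => hgB (mem_filter.2 ⟨hg, h⟩)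
  calc covNum 𝒳 (dMax F) (2 * ε) ≤ #(I.image z) :=
        covNum_dMax_le_card_of_forall_exists hcont hF _ hcover
    _ ≤ #I := card_image_le
    _ = #P * ∑ B ∈ T, #Q ^ #B := by simp [I, card_sigma, card_pi]
    _ ≤ covNum 𝒳 (dBar F) (t * ε) * (#T * covNum 𝒳 dist ε ^ m) := by
        refine Nat.mul_le_mul hP ?_
        rw [← smul_eq_mul, ← sum_const]
        exact sum_le_sum fun B hB => (Nat.pow_le_pow_right hQ₁ (mem_filter.1 hB).2).trans
          (Nat.pow_le_pow_left hQ _)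

end Counting

theorem Real.log_natCast_le_log_natCast {a b : ℕ} (h : a ≤ b) : Real.log a ≤ Real.log b := by
  rcases a.eq_zero_or_pos with rfl | ha
  · simp only [Nat.cast_zero, Real.log_zero]; positivity
  · exact Real.log_le_log (by exact_mod_cast ha) (by exact_mod_cast h)

/-- The error term in `log #(𝒳, d_F, 2ε) / |F| ≤ log #(𝒳, d̄_F, tε) / |F| + maxAvgDefect 𝒳 t ε`:
the first two summands pay for the choice of at most `t |F|` exceptional times, the last one for
locating the orbit at those times. -/
noncomputable def maxAvgDefect (𝒳 : Type*) [MetricSpace 𝒳] (t ε : ℝ) : ℝ :=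
  t * Real.log t⁻¹ + Real.log (1 - t)⁻¹ + t * Real.log (covNum 𝒳 dist ε)

section Defect

variable {G 𝒳 : Type*} [SMul G 𝒳] [MetricSpace 𝒳] [CompactSpace 𝒳]

theorem log_covNum_dBar_le_log_covNum_dMax (hcont : ∀ g : G, Continuous fun x : 𝒳 => g • x)
    {F : Finset G} (hF : F.Nonempty) {ε : ℝ} (hε : 0 < ε) :
    Real.log (covNum 𝒳 (dBar F) ε) ≤ Real.log (covNum 𝒳 (dMax F) ε) :=
  Real.log_natCast_le_log_natCast <| covNum_mono (dBar_le_dMax hF) (continuous_dMax hcont hF)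
    (dMax_self hF) (dMax_triangle_left hF) hε

theorem log_covNum_dMax_le_add (hcont : ∀ g : G, Continuous fun x : 𝒳 => g • x)
    {F : Finset G} (hF : F.Nonempty) {ε t : ℝ} (hε : 0 < ε) (ht₀ : 0 < t) (ht₁ : t < 1) :
    Real.log (covNum 𝒳 (dMax F) (2 * ε)) ≤
      Real.log (covNum 𝒳 (dBar F) (t * ε)) + #F * maxAvgDefect 𝒳 t ε := by
  have hlog_t : 0 ≤ Real.log t⁻¹ := Real.log_nonneg ((one_le_inv₀ ht₀).2 ht₁.le)
  have hlog_1t : 0 ≤ Real.log (1 - t)⁻¹ :=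
    Real.log_nonneg ((one_le_inv₀ (by linarith)).2 (by linarith))
  rcases isEmpty_or_nonempty 𝒳 with h𝒳 | h𝒳
  · simp only [covNum_of_isEmpty, maxAvgDefect, CharP.cast_eq_zero, Real.log_zero, mul_zero,
      add_zero, zero_add]
    positivity
  set m := ⌊t * #F⌋₊
  set T := {B ∈ F.powerset | #B ≤ m}
  have hN : 1 ≤ covNum 𝒳 (dBar F) (t * ε) := one_le_covNum (continuous_dBar hcont F)
    (dBar_self F) (dBar_triangle_left F) (mul_pos ht₀ hε)
  have hk : 1 ≤ covNum 𝒳 dist ε := one_le_covNum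
    (fun x : 𝒳 => continuous_const.dist continuous_id') dist_self
    (fun x y z => dist_triangle_left y z x) hε
  have hT : 1 ≤ #T := card_pos.2 ⟨∅, mem_filter.2 ⟨empty_mem_powerset F, by simp⟩⟩
  have hm : (m : ℝ) ≤ t * #F := Nat.floor_le (by positivity)
  have hlogT : Real.log #T ≤ m * Real.log t⁻¹ + #F * Real.log (1 - t)⁻¹ := by
    rw [← Real.log_pow, ← Real.log_pow, ← Real.log_mul (by positivity) (by positivity)]
    exact Real.log_le_log (by exact_mod_cast hT)
      (card_filter_card_le_inv_pow_mul_inv_pow F m ht₀ ht₁)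
  calc Real.log (covNum 𝒳 (dMax F) (2 * ε))
      ≤ Real.log ((covNum 𝒳 (dBar F) (t * ε) * (#T * covNum 𝒳 dist ε ^ m) : ℕ)) :=
        Real.log_natCast_le_log_natCast (covNum_dMax_two_mul_le hcont hF hε ht₀)
    _ = Real.log (covNum 𝒳 (dBar F) (t * ε)) + Real.log #T + m * Real.log (covNum 𝒳 dist ε) := by
        push_cast
        rw [Real.log_mul (by positivity) (by positivity), Real.log_mul (by positivity)
          (by positivity), Real.log_pow, add_assoc]
    _ ≤ Real.log (covNum 𝒳 (dBar F) (t * ε)) + #F * maxAvgDefect 𝒳 t ε := by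
        have : (m : ℝ) * Real.log (covNum 𝒳 dist ε) ≤ t * #F * Real.log (covNum 𝒳 dist ε) := by
          gcongr
        have : (m : ℝ) * Real.log t⁻¹ ≤ t * #F * Real.log t⁻¹ := by gcongr
        simp only [maxAvgDefect]
        linarith

theorem log_covNum_dMax_div_card_le (hcont : ∀ g : G, Continuous fun x : 𝒳 => g • x)
    {F : Finset G} (hF : F.Nonempty) {ε t : ℝ} (hε : 0 < ε) (ht₀ : 0 < t) (ht₁ : t < 1) :
    Real.log (covNum 𝒳 (dMax F) (2 * ε)) / #F ≤
      Real.log (covNum 𝒳 (dBar F) (t * ε)) / #F + maxAvgDefect 𝒳 t ε := by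
  have hn : (0 : ℝ) < #F := by exact_mod_cast hF.card_pos
  calc _ ≤ (Real.log (covNum 𝒳 (dBar F) (t * ε)) + #F * maxAvgDefect 𝒳 t ε) / #F := by
        gcongr; exact log_covNum_dMax_le_add hcont hF hε ht₀ ht₁
    _ = _ := by field_simp

end Defect

theorem Real.sSup_eq_sSup_of_forall_sub_mem {A B : Set ℝ} (hAB : A ⊆ B)
    (h : ∀ b ∈ B, ∀ η > 0, b - η ∈ A) : sSup A = sSup B := by
  by_cases hB : B.Nonempty ∧ BddAbove B
  · obtain ⟨⟨b, hb⟩, hbdd⟩ := hB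
    refine le_antisymm (csSup_le_csSup hbdd ⟨_, h b hb 1 one_pos⟩ hAB)
      (csSup_le ⟨b, hb⟩ fun b hb => le_of_forall_pos_le_add fun η hη => ?_)
    linarith [le_csSup (hbdd.mono hAB) (h b hb η hη)]
  · have hA : ¬(A.Nonempty ∧ BddAbove A) := fun ⟨⟨a, ha⟩, M, hM⟩ =>
      hB ⟨⟨a, hAB ha⟩, M + 1, fun b hb => by linarith [hM (h b hb 1 one_pos)]⟩
    rw [Real.sSup_def, Real.sSup_def, dif_neg hA, dif_neg hB]

section LimsupLiminf

variable {α : Type*} {l : Filter α} {u v : α → ℝ}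

theorem liminf_eq_liminf_of_forall_eventually (hvu : v ≤ᶠ[l] u)
    (h : ∀ b, (∀ᶠ x in l, b ≤ u x) → ∀ η > 0, ∀ᶠ x in l, b - η ≤ v x) :
    liminf u l = liminf v l := by
  rw [liminf_eq, liminf_eq]
  exact (Real.sSup_eq_sSup_of_forall_sub_mem (fun b hb => hb.mp (hvu.mono fun _ h1 h2 =>
    h2.trans h1)) h).symm

theorem limsup_eq_limsup_of_forall_eventually (hvu : v ≤ᶠ[l] u)
    (h : ∀ a, (∀ᶠ x in l, v x ≤ a) → ∀ η > 0, ∀ᶠ x in l, u x ≤ a + η) :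
    limsup u l = limsup v l := by
  rw [limsup_eq, limsup_eq, Real.sInf_def, Real.sInf_def]
  congr 1
  refine Real.sSup_eq_sSup_of_forall_sub_mem (fun a ha => ?_) fun b hb η hη => ?_
  · exact (show ∀ᶠ x in l, u x ≤ -a from ha).mp (hvu.mono fun _ h1 h2 => h1.trans h2)
  · simpa [neg_sub, sub_eq_neg_add] using h (-b) hb η hη

theorem limsup_eq_and_liminf_eq_of_forall_eventually_le {f : α → α} {g : ℝ → α → α}
    (hf : map f l = l) (hg : ∀ δ > 0, map (g δ) l = l) (hvu : v ≤ᶠ[l] u)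
    (h : ∀ δ > 0, ∀ᶠ x in l, u (f x) ≤ (1 + δ) ^ 2 * v (g δ x) + δ) :
    limsup u l = limsup v l ∧ liminf u l = liminf v l := by
  have hsmall : ∀ {φ : ℝ → ℝ} {c : ℝ}, ContinuousAt φ 0 → φ 0 < c → ∃ δ > 0, φ δ < c :=
    fun hφ hc =>
    let ⟨δ, hδc, hδ⟩ := (((tendsto_nhdsWithin_of_tendsto_nhds hφ.tendsto).eventually
      (gt_mem_nhds hc)).and (self_mem_nhdsWithin (s := Set.Ioi 0))).exists
    ⟨δ, hδ, hδc⟩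
  constructor
  · refine limsup_eq_limsup_of_forall_eventually hvu fun a ha η hη => ?_
    obtain ⟨δ, hδ, hδη⟩ := hsmall (φ := fun δ => (1 + δ) ^ 2 * a + δ) (c := a + η)
      (by fun_prop) (by simpa using hη)
    rw [← hg δ hδ, eventually_map] at ha
    rw [← hf, eventually_map]
    filter_upwards [h δ hδ, ha] with x hux hvx
    nlinarith [mul_le_mul_of_nonneg_left hvx (sq_nonneg (1 + δ))]
  · refine liminf_eq_liminf_of_forall_eventually hvu fun b hb η hη => ?_
    obtain ⟨δ, hδ, hδη⟩ := hsmall (φ := fun δ => -((b - δ) / (1 + δ) ^ 2))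
      (c := -(b - η)) (by fun_prop (disch := norm_num)) (by simpa using hη)
    rw [← hf, eventually_map] at hb
    rw [← hg δ hδ, eventually_map]
    filter_upwards [h δ hδ, hb] with x hux hbx
    have : (b - δ) / (1 + δ) ^ 2 ≤ v (g δ x) := by
      rw [div_le_iff₀ (by positivity)]; linarith
    linarith

end LimsupLiminf

theorem map_const_mul_nhdsGT_zero {c : ℝ} (hc : 0 < c) : map (c * ·) (𝓝[>] 0) = 𝓝[>] 0 := by
  rw [map_eq_comap_of_inverse (n := (c⁻¹ * ·)), comap_mulLeft_nhdsGT_zero (inv_pos.2 hc)] <;>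
    ext x <;> simp [hc.ne']

theorem tendsto_rpow_nhdsGT_zero_nhdsGT_zero {r : ℝ} (hr : 0 < r) :
    Tendsto (· ^ r) (𝓝[>] (0 : ℝ)) (𝓝[>] 0) :=
  tendsto_nhdsWithin_iff.2 ⟨by simpa [Real.zero_rpow hr.ne'] using
    (Real.continuousAt_rpow_const 0 r (Or.inr hr.le)).tendsto.mono_left nhdsWithin_le_nhds,
    eventually_mem_nhdsWithin.mono fun x hx => Real.rpow_pos_of_pos hx r⟩

theorem map_rpow_nhdsGT_zero {r : ℝ} (hr : 0 < r) : map (· ^ r) (𝓝[>] (0 : ℝ)) = 𝓝[>] 0 :=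
  le_antisymm (tendsto_rpow_nhdsGT_zero_nhdsGT_zero hr) <| le_map_of_right_inverse
    (eventually_mem_nhdsWithin.mono fun x hx => by
      simp [← Real.rpow_mul (le_of_lt hx), inv_mul_cancel₀ hr.ne'])
    (tendsto_rpow_nhdsGT_zero_nhdsGT_zero (inv_pos.2 hr))

theorem tendsto_maxAvgDefect {𝒳 : Type*} [MetricSpace 𝒳] (htame : TameGrowth 𝒳) {δ : ℝ}
    (hδ : 0 < δ) : Tendsto (fun ε => maxAvgDefect 𝒳 (ε ^ δ) ε) (𝓝[>] 0) (𝓝 0) := by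
  have hpow : Tendsto (fun ε : ℝ => ε ^ δ) (𝓝[>] 0) (𝓝 0) :=
    (tendsto_rpow_nhdsGT_zero_nhdsGT_zero hδ).mono_right nhdsWithin_le_nhds
  have hentropy : Tendsto (fun ε : ℝ => ε ^ δ * Real.log (ε ^ δ)⁻¹) (𝓝[>] 0) (𝓝 0) := by
    have h := (tendsto_log_mul_rpow_nhdsGT_zero hδ).const_mul (-δ)
    rw [mul_zero] at h
    refine h.congr' ?_
    filter_upwards [self_mem_nhdsWithin] with ε hε
    rw [Real.log_inv, Real.log_rpow hε]
    ring
  have hcompl : Tendsto (fun ε : ℝ => Real.log (1 - ε ^ δ)⁻¹) (𝓝[>] 0) (𝓝 0) := by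
    simpa using ((tendsto_const_nhds (x := (1 : ℝ)).sub hpow).inv₀ (by norm_num)).log
      (by norm_num)
  simpa [maxAvgDefect] using (hentropy.add hcompl).add (htame δ hδ)

section MeanDimension

variable {S St : ℝ → ℝ} {e : ℝ → ℝ → ℝ}

theorem eventually_div_abs_log_two_mul_le (hnonneg : ∀ ε > 0, 0 ≤ St ε)
    (hS : ∀ ε > 0, ∀ t, 0 < t → t < 1 → S (2 * ε) ≤ St (t * ε) + e t ε)
    (he : ∀ δ > (0 : ℝ), Tendsto (fun ε => e (ε ^ δ) ε) (𝓝[>] 0) (𝓝 0)) {δ : ℝ} (hδ : 0 < δ) :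
    ∀ᶠ ε in 𝓝[>] 0, S (2 * ε) / |Real.log (2 * ε)| ≤
      (1 + δ) ^ 2 * (St (ε ^ (1 + δ)) / |Real.log (ε ^ (1 + δ))|) + δ := by
  have hL : Tendsto (fun ε => -Real.log ε) (𝓝[>] 0) atTop :=
    tendsto_neg_atBot_atTop.comp Real.tendsto_log_nhdsGT_zero
  filter_upwards [Ioo_mem_nhdsGT (by norm_num : (0 : ℝ) < 1 / 2),
    (he δ hδ).eventually (gt_mem_nhds one_pos),
    hL.eventually_ge_atTop ((1 + (1 + δ) * Real.log 2) / δ)] with ε ⟨hε₀, hε⟩ he₁ hLε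
  set L := -Real.log ε
  rw [div_le_iff₀ hδ] at hLε
  have hlog2 : 0 < Real.log 2 := Real.log_pos one_lt_two
  have hD : 0 < L - Real.log 2 := by nlinarith
  have habs2 : |Real.log (2 * ε)| = L - Real.log 2 := by
    rw [abs_of_neg (Real.log_neg (by positivity) (by linarith)),
      Real.log_mul two_ne_zero hε₀.ne']
    ring
  have habsψ : |Real.log (ε ^ (1 + δ))| = (1 + δ) * L := by
    rw [Real.log_rpow hε₀, abs_of_neg (mul_neg_of_pos_of_neg (by linarith)
      (Real.log_neg hε₀ (by linarith)))]
    ring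
  have hψ : ε ^ δ * ε = ε ^ (1 + δ) := by rw [add_comm, Real.rpow_add_one hε₀.ne']
  have hS' := hS ε hε₀ (ε ^ δ) (Real.rpow_pos_of_pos hε₀ δ)
    (Real.rpow_lt_one hε₀.le (by linarith) hδ)
  rw [hψ] at hS'
  rw [habs2, habsψ, div_le_iff₀ hD]
  calc S (2 * ε) ≤ St (ε ^ (1 + δ)) + e (ε ^ δ) ε := hS'
    _ ≤ St (ε ^ (1 + δ)) * ((1 + δ) * (L - Real.log 2) / L) + δ * (L - Real.log 2) := by
        gcongr
        · exact le_mul_of_one_le_right (hnonneg _ (by positivity))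
            ((one_le_div (by linarith)).2 (by nlinarith))
        · nlinarith
    _ = ((1 + δ) ^ 2 * (St (ε ^ (1 + δ)) / ((1 + δ) * L)) + δ) * (L - Real.log 2) := by
        field_simp

theorem limsup_liminf_div_abs_log_eq_of_le_add (hle : ∀ ε > 0, St ε ≤ S ε)
    (hnonneg : ∀ ε > 0, 0 ≤ St ε)
    (hS : ∀ ε > 0, ∀ t, 0 < t → t < 1 → S (2 * ε) ≤ St (t * ε) + e t ε)
    (he : ∀ δ > (0 : ℝ), Tendsto (fun ε => e (ε ^ δ) ε) (𝓝[>] 0) (𝓝 0)) :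
    limsup (fun ε => S ε / |Real.log ε|) (𝓝[>] 0) =
        limsup (fun ε => St ε / |Real.log ε|) (𝓝[>] 0) ∧
      liminf (fun ε => S ε / |Real.log ε|) (𝓝[>] 0) =
        liminf (fun ε => St ε / |Real.log ε|) (𝓝[>] 0) :=
  limsup_eq_and_liminf_eq_of_forall_eventually_le (map_const_mul_nhdsGT_zero two_pos)
    (fun δ hδ => map_rpow_nhdsGT_zero (by linarith : (0 : ℝ) < 1 + δ))
    (eventually_mem_nhdsWithin.mono fun ε hε =>
      div_le_div_of_nonneg_right (hle ε hε) (abs_nonneg _))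
    fun δ hδ => eventually_div_abs_log_two_mul_le hnonneg hS he hδ

end MeanDimension

theorem mdim_max_eq_mdim_bar_general {G 𝒳 : Type*} [Group G] [DecidableEq G]
    [MulAction G 𝒳] [MetricSpace 𝒳] [CompactSpace 𝒳]
    (hcont : ∀ g : G, Continuous fun x : 𝒳 => g • x)
    (htame : TameGrowth 𝒳)
    (F : ℕ → Finset G) (hF : IsFolner F)
    (S St : ℝ → ℝ)
    (hS : ∀ ε > (0 : ℝ), Filter.Tendsto
      (fun n => Real.log (covNum 𝒳 (dMax (F n)) ε) / ((F n).card : ℝ))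
      Filter.atTop (nhds (S ε)))
    (hSt : ∀ ε > (0 : ℝ), Filter.Tendsto
      (fun n => Real.log (covNum 𝒳 (dBar (F n)) ε) / ((F n).card : ℝ))
      Filter.atTop (nhds (St ε))) :
    Filter.limsup (fun ε => S ε / |Real.log ε|) (nhdsWithin 0 (Set.Ioi 0)) =
      Filter.limsup (fun ε => St ε / |Real.log ε|) (nhdsWithin 0 (Set.Ioi 0)) ∧
    Filter.liminf (fun ε => S ε / |Real.log ε|) (nhdsWithin 0 (Set.Ioi 0)) =
      Filter.liminf (fun ε => St ε / |Real.log ε|) (nhdsWithin 0 (Set.Ioi 0)) := by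
  have hFne := hF.1
  refine limsup_liminf_div_abs_log_eq_of_le_add (e := maxAvgDefect 𝒳) (fun ε hε => ?_)
    (fun ε hε => ge_of_tendsto' (hSt ε hε) fun n => by positivity) (fun ε hε t ht₀ ht₁ => ?_)
    fun δ hδ => tendsto_maxAvgDefect htame hδ
  · exact le_of_tendsto_of_tendsto' (hSt ε hε) (hS ε hε) fun n => div_le_div_of_nonneg_right
      (log_covNum_dBar_le_log_covNum_dMax hcont (hFne n) hε) (Nat.cast_nonneg _)
  · exact le_of_tendsto_of_tendsto' (hS _ (by positivity)) ((hSt _ (by positivity)).add_const _)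
      fun n => log_covNum_dMax_div_card_le hcont (hFne n) hε ht₀ ht₁

/-- Under tame growth of covering numbers, the metric mean dimensions computed from
the max metrics `d_{F_n}` and from the averaged metrics `d̄_{F_n}` coincide, both
for `limsup` and for `liminf` as `ε → 0⁺`.  Here `S ε = lim_n (1/|F_n|) log #(𝒳,d_{F_n},ε)`
and `St ε = lim_n (1/|F_n|) log #(𝒳,d̄_{F_n},ε)`. -/
theorem mdim_max_eq_mdim_bar {G 𝒳 : Type*} [Group G] [Countable G] [DecidableEq G]
    [MulAction G 𝒳] [MetricSpace 𝒳] [CompactSpace 𝒳]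
    (hcont : ∀ g : G, Continuous fun x : 𝒳 => g • x)
    (htame : TameGrowth 𝒳)
    (F : ℕ → Finset G) (hF : IsFolner F)
    (S St : ℝ → ℝ)
    (hS : ∀ ε > (0 : ℝ), Filter.Tendsto
      (fun n => Real.log (covNum 𝒳 (dMax (F n)) ε) / ((F n).card : ℝ))
      Filter.atTop (nhds (S ε)))
    (hSt : ∀ ε > (0 : ℝ), Filter.Tendsto
      (fun n => Real.log (covNum 𝒳 (dBar (F n)) ε) / ((F n).card : ℝ))
      Filter.atTop (nhds (St ε))) :
    Filter.limsup (fun ε => S ε / |Real.log ε|) (nhdsWithin 0 (Set.Ioi 0)) =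
      Filter.limsup (fun ε => St ε / |Real.log ε|) (nhdsWithin 0 (Set.Ioi 0)) ∧
    Filter.liminf (fun ε => S ε / |Real.log ε|) (nhdsWithin 0 (Set.Ioi 0)) =
      Filter.liminf (fun ε => St ε / |Real.log ε|) (nhdsWithin 0 (Set.Ioi 0)) :=
  mdim_max_eq_mdim_bar_general hcont htame F hF S St hS hSt
end
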